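/- arXiv:1204.2892 — 4 statements merged into one kernel-verified Lean document; each statement's English description precedes it below -/
import Mathlib

section
/- Let r ≥ 1 be a real number and let Y_1, …, Y_n be independent real-valued random variables on a probability space with E[Y_i] = 0 and E[|Y_i|^{2r}] < ∞ for each i. Then there exists a constant C_r, depending only on r, such that E[|∑_{i=1}^n Y_i|^{2r}] ≤ C_r · max{ ∑_{i=1}^n E[|Y_i|^{2r}], (∑_{i=1}^n E[|Y_i|^2])^r }. -/
/-!
Write `p = 2r` and `S s = ∑ i ∈ s, Y i`. A second-order Taylor bound for `|x| ^ p`, whose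
derivative `p |x| ^ (p - 2) x` is locally Lipschitz, gives, with `K = p (p - 1) 2 ^ (p - 2)`,
`|a + b| ^ p ≤ |a| ^ p + p |a| ^ (p - 2) a b + K (|a| ^ (p - 2) b ^ 2 + |b| ^ p)`.
For `a = S s` and `b = Y i` with `i ∉ s`, independence kills the linear term in expectation and
splits the quadratic one, and Lyapunov's inequality bounds `E |S s| ^ (p - 2)` by
`(E |S s| ^ p) ^ (1 - 1/r)`. Adding the `Y i` one at a time, the largest moment
`M = max_s E |S s| ^ p` satisfies `M ≤ K (M ^ (1 - 1/r) V + T)` with `V = ∑ E (Y i) ^ 2` and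
`T = ∑ E |Y i| ^ p`, which forces `M ≤ C_r max T (V ^ r)`.
-/

open MeasureTheory ProbabilityTheory Set

theorem hasDerivAt_abs_rpow_sub_two_mul_self {p : ℝ} (hp : 2 ≤ p) (x : ℝ) :
    HasDerivAt (fun y => |y| ^ (p - 2) * y) ((p - 1) * |x| ^ (p - 2)) x := by
  rcases eq_or_ne x 0 with rfl | hx
  · have hcont : ContinuousAt (fun y : ℝ => |y| ^ (p - 2)) 0 :=
      ((Real.continuous_rpow_const (by linarith)).comp continuous_abs).continuousAt
    have hval : (p - 1) * |(0 : ℝ)| ^ (p - 2) = |(0 : ℝ)| ^ (p - 2) := by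
      rcases hp.eq_or_lt with rfl | hp
      · norm_num
      · simp [Real.zero_rpow (by linarith : p - 2 ≠ 0)]
    rw [hval, hasDerivAt_iff_tendsto_slope]
    refine (hcont.tendsto.mono_left nhdsWithin_le_nhds).congr' ?_
    filter_upwards [self_mem_nhdsWithin] with y hy
    simp [slope_def_field, mul_div_assoc, div_self (show y ≠ 0 from hy)]
  · have hx' : |x| ≠ 0 := abs_ne_zero.2 hx
    refine (((Real.hasDerivAt_rpow_const (Or.inl hx')).comp x (hasDerivAt_abs hx)).mul
      (hasDerivAt_id x)).congr_deriv ?_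
    simp only [Function.comp, id, mul_assoc, sign_mul_self, Real.rpow_sub_one hx']
    field_simp
    ring

theorem abs_abs_rpow_sub_two_mul_self_sub_le {p R x y : ℝ} (hp : 2 ≤ p) (hx : |x| ≤ R)
    (hy : |y| ≤ R) :
    |(|x| ^ (p - 2) * x) - |y| ^ (p - 2) * y| ≤ (p - 1) * R ^ (p - 2) * |x - y| := by
  have hderiv_le : ∀ z ∈ Icc (-R) R, ‖(p - 1) * |z| ^ (p - 2)‖ ≤ (p - 1) * R ^ (p - 2) := by
    intro z hz
    rw [Real.norm_of_nonneg (mul_nonneg (by linarith) (by positivity))]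
    gcongr
    · linarith
    · exact abs_le.2 hz
  simpa only [Real.norm_eq_abs] using
    (convex_Icc (-R) R).norm_image_sub_le_of_norm_hasDerivWithin_le
      (fun z _ => (hasDerivAt_abs_rpow_sub_two_mul_self hp z).hasDerivWithinAt) hderiv_le
      (abs_le.1 hy) (abs_le.1 hx)

theorem abs_abs_rpow_sub_two_mul_self {p : ℝ} (hp : 2 ≤ p) (x : ℝ) :
    |(|x| ^ (p - 2) * x)| = |x| ^ (p - 1) := by
  rw [abs_mul, abs_of_nonneg (Real.rpow_nonneg (abs_nonneg x) _)]
  rcases eq_or_ne x 0 with rfl | hx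
  · simp [Real.zero_rpow (by linarith : p - 1 ≠ 0)]
  · rw [← Real.rpow_add_one (abs_ne_zero.2 hx)]
    ring_nf

theorem Real.add_rpow_le_two_rpow_mul_rpow_add_rpow {p a b : ℝ} (ha : 0 ≤ a) (hb : 0 ≤ b)
    (hp : 0 ≤ p) : (a + b) ^ p ≤ 2 ^ p * (a ^ p + b ^ p) := calc
  (a + b) ^ p ≤ (2 * max a b) ^ p := by rw [two_mul]; gcongr <;> simp
  _ = 2 ^ p * (max a b) ^ p := Real.mul_rpow (by norm_num) (le_max_of_le_left ha)
  _ = 2 ^ p * max (a ^ p) (b ^ p) := by rw [Real.rpow_max ha hb hp]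
  _ ≤ 2 ^ p * (a ^ p + b ^ p) := by
    gcongr; exact max_le_add_of_nonneg (by positivity) (by positivity)

theorem abs_rpow_sub_two_mul_sq {p : ℝ} (hp : 2 ≤ p) (b : ℝ) :
    |b| ^ (p - 2) * b ^ 2 = |b| ^ p := by
  rw [← sq_abs, ← Real.rpow_natCast, ← Real.rpow_add' (abs_nonneg b) (by norm_num; linarith)]
  norm_num

theorem abs_add_rpow_le_taylor {p : ℝ} (hp : 2 ≤ p) (a b : ℝ) :
    |a + b| ^ p ≤ |a| ^ p + p * (|a| ^ (p - 2) * a * b)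
      + p * (p - 1) * (|a| + |b|) ^ (p - 2) * b ^ 2 := by
  set c := p * (|a| ^ (p - 2) * a * b)
  have hderiv : ∀ t ∈ Icc (0 : ℝ) 1, HasDerivWithinAt (fun t => |a + t * b| ^ p - t * c)
      (p * |a + t * b| ^ (p - 2) * (a + t * b) * b - c) (Icc 0 1) t := by
    intro t _
    have hline : HasDerivAt (fun t => a + t * b) b t := by
      simpa using ((hasDerivAt_id t).mul_const b).const_add a
    exact (((hasDerivAt_abs_rpow _ (by linarith)).comp t hline).sub
      (hasDerivAt_mul_const c)).hasDerivWithinAt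
  have hbound : ∀ t ∈ Ico (0 : ℝ) 1, ‖p * |a + t * b| ^ (p - 2) * (a + t * b) * b - c‖
      ≤ p * (p - 1) * (|a| + |b|) ^ (p - 2) * b ^ 2 := by
    intro t ⟨ht0, ht1⟩
    have htb : |t * b| ≤ |b| := by
      rw [abs_mul, abs_of_nonneg ht0]; exact mul_le_of_le_one_left (abs_nonneg b) ht1.le
    have hlip := abs_abs_rpow_sub_two_mul_self_sub_le (R := |a| + |b|) hp
      ((abs_add_le a (t * b)).trans (by linarith)) (le_add_of_nonneg_right (abs_nonneg b))
    rw [add_sub_cancel_left] at hlip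
    have hlip' : |(|a + t * b| ^ (p - 2) * (a + t * b)) - |a| ^ (p - 2) * a|
        ≤ (p - 1) * (|a| + |b|) ^ (p - 2) * |b| :=
      hlip.trans (mul_le_mul_of_nonneg_left htb
        (mul_nonneg (by linarith) (Real.rpow_nonneg (by positivity) _)))
    have hfactor : p * |a + t * b| ^ (p - 2) * (a + t * b) * b - c
        = p * b * ((|a + t * b| ^ (p - 2) * (a + t * b)) - |a| ^ (p - 2) * a) := by
      simp only [c]; ring
    calc ‖p * |a + t * b| ^ (p - 2) * (a + t * b) * b - c‖
        = p * |b| * |(|a + t * b| ^ (p - 2) * (a + t * b)) - |a| ^ (p - 2) * a| := by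
          rw [hfactor, Real.norm_eq_abs, abs_mul, abs_mul, abs_of_nonneg (by linarith : 0 ≤ p)]
      _ ≤ p * |b| * ((p - 1) * (|a| + |b|) ^ (p - 2) * |b|) :=
          mul_le_mul_of_nonneg_left hlip' (by positivity)
      _ = p * (p - 1) * (|a| + |b|) ^ (p - 2) * b ^ 2 := by
          rw [← sq_abs b]; ring
  have hmvt := norm_image_sub_le_of_norm_deriv_le_segment_01' hderiv hbound
  simp only [one_mul, zero_mul, add_zero, sub_zero, Real.norm_eq_abs] at hmvt
  linarith [(abs_le.1 hmvt).2]

theorem abs_add_rpow_le {p : ℝ} (hp : 2 ≤ p) (a b : ℝ) :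
    |a + b| ^ p ≤ |a| ^ p + p * (|a| ^ (p - 2) * a * b)
      + p * (p - 1) * 2 ^ (p - 2) * (|a| ^ (p - 2) * b ^ 2 + |b| ^ p) := by
  have hsplit := Real.add_rpow_le_two_rpow_mul_rpow_add_rpow (abs_nonneg a) (abs_nonneg b)
    (sub_nonneg.2 hp)
  have hK : 0 ≤ p * (p - 1) := by nlinarith
  calc |a + b| ^ p ≤ |a| ^ p + p * (|a| ^ (p - 2) * a * b)
        + p * (p - 1) * (|a| + |b|) ^ (p - 2) * b ^ 2 := abs_add_rpow_le_taylor hp a b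
    _ ≤ |a| ^ p + p * (|a| ^ (p - 2) * a * b)
        + p * (p - 1) * (2 ^ (p - 2) * (|a| ^ (p - 2) + |b| ^ (p - 2))) * b ^ 2 := by gcongr
    _ = _ := by rw [← abs_rpow_sub_two_mul_sq hp b]; ring

section Moments

variable {Ω : Type*} [MeasurableSpace Ω] {P : Measure Ω} {X Y : Ω → ℝ} {p q : ℝ}

theorem memLp_ofReal_iff_integrable_abs_rpow (hX : AEStronglyMeasurable X P) (hp : 0 < p) :
    MemLp X (ENNReal.ofReal p) P ↔ Integrable (fun ω => |X ω| ^ p) P := by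
  rw [← integrable_norm_rpow_iff hX (by simpa using hp) ENNReal.ofReal_ne_top,
    ENNReal.toReal_ofReal hp.le]
  rfl

namespace MeasureTheory.MemLp

theorem integrable_abs_rpow [IsFiniteMeasure P] (hX : MemLp X (ENNReal.ofReal p) P)
    (hq : 0 ≤ q) (hqp : q ≤ p) : Integrable (fun ω => |X ω| ^ q) P := by
  simpa [ENNReal.toReal_ofReal hq] using
    (hX.mono_exponent (ENNReal.ofReal_le_ofReal hqp)).integrable_norm_rpow'

theorem integrable_abs_rpow_sub_two_mul_self [IsFiniteMeasure P] (hp : 2 ≤ p)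
    (hX : MemLp X (ENNReal.ofReal p) P) : Integrable (fun ω => |X ω| ^ (p - 2) * X ω) P :=
  (hX.integrable_abs_rpow (by linarith) (by linarith : p - 1 ≤ p)).mono'
    ((((Real.continuous_rpow_const (by linarith)).comp continuous_abs).mul
      continuous_id).comp_aestronglyMeasurable hX.aestronglyMeasurable)
    (ae_of_all _ fun ω => (abs_abs_rpow_sub_two_mul_self hp (X ω)).le)

theorem integral_abs_rpow_le [IsProbabilityMeasure P] (hX : MemLp X (ENNReal.ofReal p) P)
    (hq : 0 ≤ q) (hqp : q ≤ p) :
    ∫ ω, |X ω| ^ q ∂P ≤ (∫ ω, |X ω| ^ p ∂P) ^ (q / p) := by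
  have hp : 0 ≤ p := hq.trans hqp
  have hpow : ∀ x : ℝ, 0 ≤ x → (x ^ p) ^ (q / p) = x ^ q := by
    intro x hx
    rw [← Real.rpow_mul hx]
    rcases hp.eq_or_lt with rfl | hp
    · simp [le_antisymm hqp hq]
    · rw [mul_div_cancel₀ q hp.ne']
  have hconcave := Real.concaveOn_rpow (div_nonneg hq hp) (div_le_one_of_le₀ hqp hp)
  have hjensen := hconcave.le_map_integral
    (Real.continuous_rpow_const (div_nonneg hq hp)).continuousOn isClosed_Ici
    (ae_of_all _ fun ω => Real.rpow_nonneg (abs_nonneg (X ω)) p)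
    (hX.integrable_abs_rpow hp le_rfl) (f := fun ω => |X ω| ^ p)
    (by simpa [Function.comp_def, hpow _ (abs_nonneg _)] using hX.integrable_abs_rpow hq hqp)
  simpa only [hpow _ (abs_nonneg _)] using hjensen

end MeasureTheory.MemLp

theorem ProbabilityTheory.IndepFun.integral_abs_add_rpow_le [IsProbabilityMeasure P]
    (hp : 2 ≤ p) (hXY : IndepFun X Y P) (hX : MemLp X (ENNReal.ofReal p) P)
    (hY : MemLp Y (ENNReal.ofReal p) P) (hY0 : ∫ ω, Y ω ∂P = 0) :
    ∫ ω, |X ω + Y ω| ^ p ∂P ≤ ∫ ω, |X ω| ^ p ∂P + p * (p - 1) * 2 ^ (p - 2) *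
      ((∫ ω, |X ω| ^ p ∂P) ^ ((p - 2) / p) * ∫ ω, Y ω ^ 2 ∂P + ∫ ω, |Y ω| ^ p ∂P) := by
  set K := p * (p - 1) * 2 ^ (p - 2)
  have hK : 0 ≤ K := mul_nonneg (by nlinarith) (by positivity)
  have hpow : Continuous fun x : ℝ => |x| ^ (p - 2) :=
    (Real.continuous_rpow_const (by linarith)).comp continuous_abs
  have hXm := hX.aestronglyMeasurable.aemeasurable
  have hYm := hY.aestronglyMeasurable.aemeasurable
  have hXp := hX.integrable_abs_rpow (by linarith) le_rfl
  have hYp := hY.integrable_abs_rpow (by linarith) le_rfl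
  have hY1 : Integrable Y P :=
    hY.integrable (by simpa using ENNReal.ofReal_le_ofReal (by linarith : (1 : ℝ) ≤ p))
  have hY2 : Integrable (fun ω => Y ω ^ 2) P :=
    (hY.mono_exponent (by simpa using ENNReal.ofReal_le_ofReal hp)).integrable_sq
  have hlin : Integrable (fun ω => |X ω| ^ (p - 2) * X ω * Y ω) P :=
    (hXY.comp (hpow.mul continuous_id).measurable measurable_id).integrable_mul
      (hX.integrable_abs_rpow_sub_two_mul_self hp) hY1
  have hquad : Integrable (fun ω => |X ω| ^ (p - 2) * Y ω ^ 2) P :=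
    (hXY.comp hpow.measurable (continuous_pow 2).measurable).integrable_mul
      (hX.integrable_abs_rpow (by linarith) (by linarith)) hY2
  have hlin_eq : ∫ ω, |X ω| ^ (p - 2) * X ω * Y ω ∂P = 0 :=
    (hXY.integral_fun_comp_mul_comp hXm hYm (hpow.mul continuous_id).aestronglyMeasurable
      aestronglyMeasurable_id).trans (by simp [hY0])
  have hquad_eq : ∫ ω, |X ω| ^ (p - 2) * Y ω ^ 2 ∂P
      = (∫ ω, |X ω| ^ (p - 2) ∂P) * ∫ ω, Y ω ^ 2 ∂P :=
    hXY.integral_fun_comp_mul_comp hXm hYm hpow.aestronglyMeasurable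
      (continuous_pow 2).aestronglyMeasurable
  calc ∫ ω, |X ω + Y ω| ^ p ∂P
      ≤ ∫ ω, (|X ω| ^ p + p * (|X ω| ^ (p - 2) * X ω * Y ω)
          + K * (|X ω| ^ (p - 2) * Y ω ^ 2 + |Y ω| ^ p)) ∂P :=
        integral_mono ((hX.add hY).integrable_abs_rpow (by linarith) le_rfl)
          ((hXp.add (hlin.const_mul p)).add ((hquad.add hYp).const_mul K))
          fun ω => abs_add_rpow_le hp (X ω) (Y ω)
    _ = ∫ ω, |X ω| ^ p ∂P + K * ((∫ ω, |X ω| ^ (p - 2) ∂P) * ∫ ω, Y ω ^ 2 ∂P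
          + ∫ ω, |Y ω| ^ p ∂P) := by
        rw [integral_add (by exact hXp.add (hlin.const_mul p))
            (by exact (hquad.add hYp).const_mul K),
          integral_add hXp (hlin.const_mul p), integral_const_mul, integral_const_mul,
          integral_add hquad hYp, hlin_eq, hquad_eq, mul_zero, add_zero]
    _ ≤ _ := by
        gcongr
        exact hX.integral_abs_rpow_le (by linarith) (by linarith)

end Moments

theorem le_max_mul_max_of_le_mul_rpow_add {M V T K r : ℝ} (hr : 1 ≤ r) (hM : 0 ≤ M)
    (hV : 0 ≤ V) (hT : 0 ≤ T) (hK : 0 ≤ K) (h : M ≤ K * (M ^ (1 - r⁻¹) * V + T)) :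
    M ≤ max (2 * K) ((2 * K) ^ r) * max T (V ^ r) := by
  have hC : 0 ≤ max (2 * K) ((2 * K) ^ r) := le_max_of_le_left (by positivity)
  rcases le_or_gt (K * (M ^ (1 - r⁻¹) * V)) (M / 2) with hsmall | hlarge
  · calc M ≤ 2 * K * T := by linarith
      _ ≤ max (2 * K) ((2 * K) ^ r) * max T (V ^ r) :=
        mul_le_mul (le_max_left _ _) (le_max_left _ _) hT hC
  rcases hM.eq_or_lt with rfl | hMpos
  · positivity
  have hroot : M ^ r⁻¹ < 2 * K * V := by
    refine lt_of_mul_lt_mul_left ?_ (Real.rpow_nonneg hM (1 - r⁻¹))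
    rw [← Real.rpow_add hMpos, sub_add_cancel, Real.rpow_one]
    linarith
  calc M = (M ^ r⁻¹) ^ r := by
        rw [← Real.rpow_mul hM, inv_mul_cancel₀ (by linarith), Real.rpow_one]
    _ ≤ (2 * K * V) ^ r := Real.rpow_le_rpow (by positivity) hroot.le (by linarith)
    _ = (2 * K) ^ r * V ^ r := Real.mul_rpow (by positivity) hV
    _ ≤ max (2 * K) ((2 * K) ^ r) * max T (V ^ r) :=
      mul_le_mul (le_max_right _ _) (le_max_right _ _) (by positivity) hC

theorem Finset.sup'_le_mul_rpow_sup'_add_of_insert_le {ι : Type*} [Fintype ι] [DecidableEq ι]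
    {A : Finset ι → ℝ} {v t : ι → ℝ} {K e : ℝ} (hA₀ : A ∅ = 0) (hA : ∀ s, 0 ≤ A s)
    (he : 0 ≤ e) (hv : ∀ i, 0 ≤ v i) (ht : ∀ i, 0 ≤ t i) (hK : 0 ≤ K)
    (hstep : ∀ i s, i ∉ s → A (insert i s) ≤ A s + K * (A s ^ e * v i + t i)) :
    univ.sup' univ_nonempty A ≤
      K * ((univ.sup' univ_nonempty A) ^ e * ∑ i, v i + ∑ i, t i) := by
  set M := univ.sup' univ_nonempty A
  have hAM : ∀ s, A s ≤ M := fun s => le_sup' A (mem_univ s)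
  have hpartial : ∀ s, A s ≤ K * (M ^ e * ∑ i ∈ s, v i + ∑ i ∈ s, t i) := by
    intro s
    induction s using Finset.induction_on with
    | empty => simp [hA₀]
    | insert i s hi hs =>
      have hpow : A s ^ e ≤ M ^ e := Real.rpow_le_rpow (hA s) (hAM s) he
      calc A (insert i s) ≤ A s + K * (A s ^ e * v i + t i) := hstep i s hi
        _ ≤ K * (M ^ e * ∑ i ∈ s, v i + ∑ i ∈ s, t i) + K * (M ^ e * v i + t i) := by
          gcongr
          exact hv i
        _ = K * (M ^ e * ∑ i ∈ insert i s, v i + ∑ i ∈ insert i s, t i) := by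
          rw [sum_insert hi, sum_insert hi]; ring
  refine sup'_le _ _ fun s _ => (hpartial s).trans ?_
  have hMe : 0 ≤ M ^ e := Real.rpow_nonneg ((hA ∅).trans (hAM ∅)) e
  gcongr K * (M ^ e * ?_ + ?_)
  · exact sum_le_univ_sum_of_nonneg hv
  · exact sum_le_univ_sum_of_nonneg ht

/-- **Rosenthal's inequality.** For every real `r ≥ 1` there is a constant `C_r`,
depending only on `r`, such that for any independent centered real random variables
`Y 1, …, Y n` with finite `2r`-th absolute moments,
`E[|∑ Y i|^{2r}] ≤ C_r * max (∑ E[|Y i|^{2r}]) ((∑ E[|Y i|^2])^r)`. -/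
theorem rosenthal_inequality (r : ℝ) (hr : 1 ≤ r) :
    ∃ C : ℝ, ∀ (Ω : Type) (mΩ : MeasurableSpace Ω) (P : Measure Ω),
      IsProbabilityMeasure P →
      ∀ (n : ℕ) (Y : Fin n → Ω → ℝ),
        (∀ i, Measurable (Y i)) →
        iIndepFun Y P →
        (∀ i, ∫ ω, Y i ω ∂P = 0) →
        (∀ i, Integrable (fun ω => |Y i ω| ^ (2 * r)) P) →
        ∫ ω, |∑ i, Y i ω| ^ (2 * r) ∂P ≤
          C * max (∑ i, ∫ ω, |Y i ω| ^ (2 * r) ∂P)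
            ((∑ i, ∫ ω, |Y i ω| ^ (2 : ℝ) ∂P) ^ r) := by
  set p := 2 * r
  have hp : 2 ≤ p := by linarith
  set K := p * (p - 1) * 2 ^ (p - 2)
  have hK : 0 ≤ K := mul_nonneg (by nlinarith) (by positivity)
  refine ⟨max (2 * K) ((2 * K) ^ r), fun Ω _ P _ n Y hmeas hindep hmean hint => ?_⟩
  have hY : ∀ i, MemLp (Y i) (ENNReal.ofReal p) P := fun i =>
    (memLp_ofReal_iff_integrable_abs_rpow (hmeas i).aestronglyMeasurable (by linarith)).2 (hint i)
  have hnonneg : ∀ {q : ℝ} (f : Ω → ℝ), 0 ≤ ∫ ω, |f ω| ^ q ∂P := fun f =>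
    integral_nonneg fun ω => Real.rpow_nonneg (abs_nonneg (f ω)) _
  set A : Finset (Fin n) → ℝ := fun s => ∫ ω, |∑ i ∈ s, Y i ω| ^ p ∂P
  have hstep : ∀ i s, i ∉ s → A (insert i s) ≤
      A s + K * (A s ^ (1 - r⁻¹) * ∫ ω, |Y i ω| ^ (2 : ℝ) ∂P + ∫ ω, |Y i ω| ^ p ∂P) := by
    intro i s hi
    have h := (hindep.indepFun_finsetSum_of_notMem hmeas hi).integral_abs_add_rpow_le hp
      (memLp_finsetSum' s fun j _ => hY j) (hY i) (hmean i)
    rw [show (p - 2) / p = 1 - r⁻¹ by field_simp; ring] at h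
    simpa [A, Finset.sum_insert hi, add_comm, Real.rpow_two] using h
  have hM := Finset.sup'_le_mul_rpow_sup'_add_of_insert_le (A := A)
    (by simp [A, Real.zero_rpow (by linarith : p ≠ 0)]) (fun s => hnonneg _)
    (sub_nonneg.2 (inv_le_one_of_one_le₀ hr)) (fun i => hnonneg _) (fun i => hnonneg _) hK hstep
  calc ∫ ω, |∑ i, Y i ω| ^ p ∂P = A Finset.univ := rfl
    _ ≤ Finset.univ.sup' Finset.univ_nonempty A := Finset.le_sup' A (Finset.mem_univ _)
    _ ≤ _ := le_max_mul_max_of_le_mul_rpow_add hr ((hnonneg _).trans (Finset.le_sup' A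
      (Finset.mem_univ ∅))) (Finset.sum_nonneg fun i _ => hnonneg _)
      (Finset.sum_nonneg fun i _ => hnonneg _) hK hM
end

section
/- Let (Z_j)_{j≥1} be i.i.d. real-valued random variables with mean zero, unit variance, and finite moments of every order. For each n ∈ ℕ define the Donsker approximation S^n on [0,1] by S^n_t = n^{−1/2} ( ∑_{j=1}^{i−1} Z_j + n·(t − (i−1)/n) · Z_i ) for t ∈ [(i−1)/n, i/n], i ∈ {1,…,n}. Then for every integer p ≥ 1 there exists a constant C_p, depending only on p and the law of Z_1, such that sup_{n∈ℕ} E[ |S^n_t − S^n_s|^{2p} ] ≤ C_p |t−s|^p for all 0 ≤ s < t ≤ 1. -/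
open MeasureTheory ProbabilityTheory

/-- The Donsker approximation built from the variables `(Z_j)_{j≥1}` (here `Z j` stands
for `Z_{j+1}`): the piecewise linear process on `[0,1]` with nodes
`S^n_{i/n} = n^{-1/2} ∑_{j=1}^{i} Z_j`, linearly interpolated on `[(i-1)/n, i/n]`.
For `t ∈ [(i-1)/n, i/n]` one has `⌊nt⌋ = i - 1` (or `i` with a vanishing extra term),
so this closed formula agrees with the piecewise description. -/
noncomputable def donskerApprox {Ω : Type*} (Z : ℕ → Ω → ℝ) (n : ℕ) (t : ℝ) (ω : Ω) : ℝ :=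
  ((n : ℝ) ^ ((1 : ℝ) / 2))⁻¹ *
    ((∑ j ∈ Finset.range ⌊(n : ℝ) * t⌋₊, Z j ω) +
      ((n : ℝ) * t - (⌊(n : ℝ) * t⌋₊ : ℝ)) * Z ⌊(n : ℝ) * t⌋₊ ω)

/-!
The increment `S^n_t - S^n_s` equals `n^{-1/2} ∑_j a_j Z_j`, where `a_j` is the length of
`[j, j + 1] ∩ [ns, nt]`; thus `0 ≤ a_j ≤ c := min 1 (n(t - s))` and `∑ a_j = n(t - s)`.
For independent centred `Z_j` with bounded moments and weights `|a_j| ≤ 1`, expanding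
`(a_i Z_i + S)^{2q}` binomially, factorising by independence, dropping the linear term since
`E Z_i = 0`, and bounding the odd moments of `S` by its even ones gives, by induction on the
number of summands, `E (∑ a_j Z_j)^{2q} ≤ (K (1 + ∑ a_j²))^q` with `K = 2 · 4^p · M`,
where `M` bounds the first `2p` moments. Rescaling the weights by `c` turns this into
`(K (c² + ∑ a_j²))^q ≤ (2 K n (t - s))^q`, and `n^{-p}` cancels the `n^p`.
-/

open Finset

section Moments

variable {Ω : Type*} {mΩ : MeasurableSpace Ω} {P : Measure Ω}

lemma integrable_pow_of_memLp [IsFiniteMeasure P] {X : Ω → ℝ} {m : ℕ} (hX : MemLp X m P) :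
    Integrable (fun ω => X ω ^ m) P :=
  (integrable_norm_iff (hX.1.pow m)).1 (by simpa [norm_pow] using hX.integrable_norm_pow')

lemma memLp_of_integrable_abs_pow {X : Ω → ℝ} {m : ℕ} (hX : AEStronglyMeasurable X P)
    (hint : Integrable (fun ω => |X ω| ^ m) P) : MemLp X m P := by
  rcases eq_or_ne m 0 with rfl | hm
  · simpa using hX
  · rw [← integrable_norm_rpow_iff hX (by exact_mod_cast hm) (by simp)]
    simpa [Real.norm_eq_abs] using hint

lemma abs_pow_two_mul_add_one_le (x : ℝ) (r : ℕ) :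
    |x| ^ (2 * r + 1) ≤ x ^ (2 * r) + x ^ (2 * r + 2) := by
  have hx : |x| ≤ 1 + x ^ 2 := by nlinarith [abs_nonneg x, sq_abs x]
  calc |x| ^ (2 * r + 1) = |x| ^ (2 * r) * |x| := pow_succ _ _
    _ ≤ |x| ^ (2 * r) * (1 + x ^ 2) := by gcongr
    _ = x ^ (2 * r) + x ^ (2 * r + 2) := by rw [(even_two_mul r).pow_abs]; ring

lemma abs_integral_pow_le_of_integral_even_pow_le [IsFiniteMeasure P] {Y : Ω → ℝ}
    (hY : ∀ m : ℕ, MemLp Y m P) {q : ℕ} {B : ℝ} (hB : ∀ r ≤ q, ∫ ω, Y ω ^ (2 * r) ∂P ≤ B)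
    {m : ℕ} (hm : m ≤ 2 * q) : |∫ ω, Y ω ^ m ∂P| ≤ 2 * B := by
  have heven : ∀ r, 0 ≤ ∫ ω, Y ω ^ (2 * r) ∂P := fun r =>
    integral_nonneg fun ω => (even_two_mul r).pow_nonneg _
  have hB0 : 0 ≤ B := (heven 0).trans (hB 0 (Nat.zero_le q))
  obtain ⟨r, rfl | rfl⟩ := m.even_or_odd'
  · rw [abs_of_nonneg (heven r)]
    linarith [hB r (by omega)]
  · calc |∫ ω, Y ω ^ (2 * r + 1) ∂P| ≤ ∫ ω, |Y ω| ^ (2 * r + 1) ∂P := by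
          simpa only [Real.norm_eq_abs, abs_pow] using
            norm_integral_le_integral_norm (fun ω => Y ω ^ (2 * r + 1))
      _ ≤ ∫ ω, (Y ω ^ (2 * r) + Y ω ^ (2 * (r + 1))) ∂P :=
          integral_mono (by simpa using (hY _).integrable_norm_pow')
            ((integrable_pow_of_memLp (hY _)).add (integrable_pow_of_memLp (hY _)))
            fun ω => abs_pow_two_mul_add_one_le (Y ω) r
      _ ≤ 2 * B := by
          rw [integral_add (integrable_pow_of_memLp (hY _)) (integrable_pow_of_memLp (hY _))]
          linarith [hB r (by omega), hB (r + 1) (by omega)]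

lemma integral_add_pow_of_indepFun [IsFiniteMeasure P] {X Y : Ω → ℝ} (hXY : IndepFun X Y P)
    (hX : ∀ m : ℕ, MemLp X m P) (hY : ∀ m : ℕ, MemLp Y m P) (n : ℕ) :
    ∫ ω, (X ω + Y ω) ^ n ∂P =
      ∑ k ∈ range (n + 1), (∫ ω, X ω ^ k ∂P) * (∫ ω, Y ω ^ (n - k) ∂P) * n.choose k := by
  have hpow : ∀ k l : ℕ, IndepFun (fun ω => X ω ^ k) (fun ω => Y ω ^ l) P := fun k l =>
    hXY.comp (measurable_id.pow_const k) (measurable_id.pow_const l)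
  simp_rw [add_pow]
  have hint : ∀ k ∈ range (n + 1),
      Integrable (fun ω => X ω ^ k * Y ω ^ (n - k) * (n.choose k : ℝ)) P := fun k _ =>
    ((hpow k (n - k)).integrable_mul (integrable_pow_of_memLp (hX k))
      (integrable_pow_of_memLp (hY (n - k)))).mul_const _
  rw [integral_finsetSum _ hint]
  refine sum_congr rfl fun k _ => ?_
  rw [integral_mul_const, (hpow k _).integral_fun_mul_eq_mul_integral
    ((hX k).1.pow k) ((hY (n - k)).1.pow (n - k))]

lemma sum_range_choose_add_two_le (q : ℕ) :
    ∑ k ∈ range (2 * q + 1), ((2 * q + 2).choose (k + 2) : ℝ) ≤ 4 ^ (q + 1) := by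
  have h := Nat.sum_range_choose (2 * q + 2)
  rw [sum_range_succ', sum_range_succ'] at h
  have h' : ∑ k ∈ range (2 * q + 1), (2 * q + 2).choose (k + 2) ≤ 4 ^ (q + 1) := by
    rw [show 4 ^ (q + 1) = 2 ^ (2 * q + 2) by
      rw [show 2 * q + 2 = 2 * (q + 1) by ring, pow_mul]; norm_num, ← h]
    exact le_add_right (le_add_right le_rfl)
  exact_mod_cast h'

lemma integral_add_pow_le_of_indepFun [IsProbabilityMeasure P] {X Y : Ω → ℝ}
    (hXY : IndepFun X Y P) (hX : ∀ m : ℕ, MemLp X m P) (hY : ∀ m : ℕ, MemLp Y m P)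
    (hX_mean : ∫ ω, X ω ∂P = 0) {q : ℕ} {σ B : ℝ}
    (hσ : ∀ k, 2 ≤ k → k ≤ 2 * q + 2 → |∫ ω, X ω ^ k ∂P| ≤ σ)
    (hB : ∀ r ≤ q, ∫ ω, Y ω ^ (2 * r) ∂P ≤ B) :
    ∫ ω, (X ω + Y ω) ^ (2 * q + 2) ∂P ≤
      ∫ ω, Y ω ^ (2 * q + 2) ∂P + 4 ^ (q + 1) * (σ * (2 * B)) := by
  have hσ0 : 0 ≤ σ := (abs_nonneg _).trans (hσ 2 le_rfl (by omega))
  have hB0 : 0 ≤ B := by linarith [show (1 : ℝ) ≤ B by simpa using hB 0 (Nat.zero_le q)]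
  have hterm : ∀ k ∈ range (2 * q + 1),
      (∫ ω, X ω ^ (k + 2) ∂P) * (∫ ω, Y ω ^ (2 * q + 2 - (k + 2)) ∂P) *
        ((2 * q + 2).choose (k + 2) : ℝ) ≤ (2 * q + 2).choose (k + 2) * (σ * (2 * B)) := by
    intro k hk
    rw [mem_range] at hk
    have hXk := hσ (k + 2) (by omega) (by omega)
    have hYk := abs_integral_pow_le_of_integral_even_pow_le hY hB
      (m := 2 * q + 2 - (k + 2)) (by omega)
    rw [mul_comm]
    refine mul_le_mul_of_nonneg_left ((le_abs_self _).trans ?_) (Nat.cast_nonneg _)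
    rw [abs_mul]
    exact mul_le_mul hXk hYk (abs_nonneg _) hσ0
  have hrest : ∑ k ∈ range (2 * q + 1), (∫ ω, X ω ^ (k + 1 + 1) ∂P) *
      (∫ ω, Y ω ^ (2 * q + 2 - (k + 1 + 1)) ∂P) * ((2 * q + 2).choose (k + 1 + 1) : ℝ) ≤
        4 ^ (q + 1) * (σ * (2 * B)) := by
    refine (sum_le_sum hterm).trans ?_
    rw [← sum_mul]
    exact mul_le_mul_of_nonneg_right (sum_range_choose_add_two_le q) (by positivity)
  rw [integral_add_pow_of_indepFun hXY hX hY, sum_range_succ', sum_range_succ']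
  simp only [zero_add, pow_one, hX_mean, zero_mul, pow_zero, integral_const, probReal_univ,
    one_smul, one_mul, Nat.sub_zero, Nat.choose_zero_right, Nat.cast_one, mul_one]
  linarith

lemma abs_integral_const_mul_pow_le {X : Ω → ℝ} {a : ℝ} (ha : |a| ≤ 1) {k : ℕ} (hk : 2 ≤ k) :
    |∫ ω, (a * X ω) ^ k ∂P| ≤ a ^ 2 * |∫ ω, X ω ^ k ∂P| := by
  simp_rw [mul_pow]
  rw [integral_const_mul, abs_mul, abs_pow, ← sq_abs]
  exact mul_le_mul_of_nonneg_right (pow_le_pow_of_le_one (abs_nonneg _) ha hk) (abs_nonneg _)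

lemma indepFun_const_mul_sum_of_notMem {Z : ℕ → Ω → ℝ} (hmeas : ∀ j, Measurable (Z j))
    (hindep : iIndepFun Z P) (a : ℕ → ℝ) {F : Finset ℕ} {i : ℕ} (hi : i ∉ F) :
    IndepFun (fun ω => a i * Z i ω) (fun ω => ∑ j ∈ F, a j * Z j ω) P := by
  have h := (hindep.comp (fun j x => a j * x) fun j => measurable_const_mul (a j)
    ).indepFun_finsetSum_of_notMem (fun j => (measurable_const_mul (a j)).comp (hmeas j)) hi
  rw [show (∑ j ∈ F, (fun x => a j * x) ∘ Z j) = fun ω => ∑ j ∈ F, a j * Z j ω by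
    ext ω; simp [Finset.sum_apply]] at h
  exact h.symm

end Moments

lemma pow_succ_add_mul_pow_le {B x : ℝ} (hB : 0 ≤ B) (hx : 0 ≤ x) (q : ℕ) :
    B ^ (q + 1) + x * B ^ q ≤ (B + x) ^ (q + 1) :=
  calc B ^ (q + 1) + x * B ^ q = B ^ q * (B + x) := by ring
    _ ≤ (B + x) ^ q * (B + x) := by gcongr; linarith
    _ = (B + x) ^ (q + 1) := (pow_succ _ _).symm

/-- The length of `[j, j + 1] ∩ (-∞, r]`. -/
def donskerWeight (r : ℝ) (j : ℕ) : ℝ := min r (j + 1) - min r j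

lemma sum_range_donskerWeight {r : ℝ} (hr : 0 ≤ r) {m : ℕ} (hrm : r ≤ m) :
    ∑ j ∈ range m, donskerWeight r j = r := by
  have h := sum_range_sub (fun j : ℕ => min r (j : ℝ)) m
  simp only [Nat.cast_succ, Nat.cast_zero] at h
  rw [show ∑ j ∈ range m, donskerWeight r j = _ from h, min_eq_left hrm, min_eq_right hr, sub_zero]

lemma donskerWeight_sub_nonneg_and_le {s t : ℝ} (hst : s ≤ t) (j : ℕ) :
    0 ≤ donskerWeight t j - donskerWeight s j ∧
      donskerWeight t j - donskerWeight s j ≤ min 1 (t - s) := by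
  simp only [donskerWeight, min_def]
  split_ifs <;> constructor <;> linarith

lemma sum_range_donskerWeight_mul {r : ℝ} (hr : 0 ≤ r) {m : ℕ} (hm : ⌊r⌋₊ < m) (z : ℕ → ℝ) :
    ∑ j ∈ range m, donskerWeight r j * z j =
      ∑ j ∈ range ⌊r⌋₊, z j + (r - ⌊r⌋₊) * z ⌊r⌋₊ := by
  have hfl : (⌊r⌋₊ : ℝ) ≤ r := Nat.floor_le hr
  have hfl' : r < ⌊r⌋₊ + 1 := Nat.lt_floor_add_one r
  rw [← sum_range_add_sum_Ico _ hm.le]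
  congr 1
  · refine sum_congr rfl fun j hj => ?_
    have hj : (j : ℝ) + 1 ≤ ⌊r⌋₊ := by exact_mod_cast mem_range.1 hj
    rw [donskerWeight, min_eq_right (by linarith), min_eq_right (by linarith), add_sub_cancel_left,
      one_mul]
  · rw [sum_eq_single_of_mem _ (mem_Ico.2 ⟨le_rfl, hm⟩)]
    · rw [donskerWeight, min_eq_left hfl'.le, min_eq_right hfl]
    · intro j hj hne
      have hj : (⌊r⌋₊ : ℝ) + 1 ≤ j := by
        exact_mod_cast Nat.succ_le_of_lt (lt_of_le_of_ne (mem_Ico.1 hj).1 (Ne.symm hne))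
      rw [donskerWeight, min_eq_left (by linarith), min_eq_left (by linarith), sub_self, zero_mul]

lemma donskerApprox_eq_sum {Ω : Type*} (Z : ℕ → Ω → ℝ) (n : ℕ) {t : ℝ} (ht0 : 0 ≤ t)
    (ht1 : t ≤ 1) (ω : Ω) :
    donskerApprox Z n t ω = (√n)⁻¹ * ∑ j ∈ range (n + 1), donskerWeight (n * t) j * Z j ω := by
  have hnt : (n : ℝ) * t ≤ n := mul_le_of_le_one_right n.cast_nonneg ht1
  rw [donskerApprox, Real.sqrt_eq_rpow, sum_range_donskerWeight_mul (by positivity)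
    (Nat.lt_succ_of_le (Nat.floor_le_of_le hnt))]

lemma sq_add_sum_sq_donskerWeight_sub_le {s t : ℝ} (hs : 0 ≤ s) (hst : s < t) {m : ℕ}
    (htm : t ≤ m) :
    min 1 (t - s) ^ 2 + ∑ j ∈ range m, (donskerWeight t j - donskerWeight s j) ^ 2 ≤
      2 * (t - s) := by
  have ha := donskerWeight_sub_nonneg_and_le hst.le
  have hsum : ∑ j ∈ range m, (donskerWeight t j - donskerWeight s j) = t - s := by
    rw [sum_sub_distrib, sum_range_donskerWeight (by linarith) htm,
      sum_range_donskerWeight hs (by linarith)]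
  have hsq : ∑ j ∈ range m, (donskerWeight t j - donskerWeight s j) ^ 2 ≤
      min 1 (t - s) * (t - s) := by
    calc _ ≤ ∑ j ∈ range m, min 1 (t - s) * (donskerWeight t j - donskerWeight s j) :=
          sum_le_sum fun j _ => by nlinarith [ha j]
      _ = _ := by rw [← mul_sum, hsum]
  nlinarith [min_le_left 1 (t - s), min_le_right 1 (t - s), lt_min one_pos (sub_pos.2 hst)]

lemma donskerApprox_sub_eq_sum {Ω : Type*} (Z : ℕ → Ω → ℝ) (n : ℕ) {s t : ℝ} (hs : 0 ≤ s)
    (hst : s ≤ t) (ht : t ≤ 1) (ω : Ω) :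
    donskerApprox Z n t ω - donskerApprox Z n s ω = (√n)⁻¹ *
      ∑ j ∈ range (n + 1), (donskerWeight (n * t) j - donskerWeight (n * s) j) * Z j ω := by
  rw [donskerApprox_eq_sum Z n (hs.trans hst) ht, donskerApprox_eq_sum Z n hs (hst.trans ht),
    ← mul_sub, ← sum_sub_distrib]
  simp only [sub_mul]

section WeightedSums

variable {Ω : Type*} {mΩ : MeasurableSpace Ω} {P : Measure Ω} [IsProbabilityMeasure P]
  {Z : ℕ → Ω → ℝ}

theorem integral_sum_mul_pow_le (hmeas : ∀ j, Measurable (Z j)) (hindep : iIndepFun Z P)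
    (hLp : ∀ j (m : ℕ), MemLp (Z j) m P) (hmean : ∀ j, ∫ ω, Z j ω ∂P = 0) {p : ℕ} {M : ℝ}
    (hM : ∀ j r, r ≤ 2 * p → |∫ ω, Z j ω ^ r ∂P| ≤ M) {a : ℕ → ℝ} (ha : ∀ j, |a j| ≤ 1)
    (F : Finset ℕ) {q : ℕ} (hq : q ≤ p) :
    ∫ ω, (∑ j ∈ F, a j * Z j ω) ^ (2 * q) ∂P ≤
      (2 * 4 ^ p * M * (1 + ∑ j ∈ F, a j ^ 2)) ^ q := by
  set K := 2 * 4 ^ p * M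
  have hM1 : 1 ≤ M := by simpa using hM 0 0 (Nat.zero_le _)
  have hK : 1 ≤ K := by
    have h4 : (1 : ℝ) ≤ 4 ^ p := one_le_pow₀ (by norm_num)
    nlinarith
  induction F using Finset.induction_on generalizing q with
  | empty =>
    rcases q with _ | q
    · simp
    · simp only [sum_empty, zero_pow (by omega : 2 * (q + 1) ≠ 0), integral_zero]
      positivity
  | insert i F hi ih =>
    rcases q with _ | q
    · simp
    set B := K * (1 + ∑ j ∈ F, a j ^ 2)
    have hB : 1 ≤ B := by
      have : 0 ≤ ∑ j ∈ F, a j ^ 2 := sum_nonneg fun j _ => sq_nonneg _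
      nlinarith
    have hXmom : ∀ k, 2 ≤ k → k ≤ 2 * q + 2 → |∫ ω, (a i * Z i ω) ^ k ∂P| ≤ a i ^ 2 * M :=
      fun k hk2 hk => (abs_integral_const_mul_pow_le (ha i) hk2).trans
        (mul_le_mul_of_nonneg_left (hM i k (by omega)) (sq_nonneg _))
    have hstep := integral_add_pow_le_of_indepFun
      (indepFun_const_mul_sum_of_notMem hmeas hindep a hi) (fun m => (hLp i m).const_mul _)
      (fun m => memLp_finsetSum F fun j _ => (hLp j m).const_mul _)
      (by simp [integral_const_mul, hmean]) hXmom (B := B ^ q)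
      (fun r hr => (ih (by omega)).trans (pow_le_pow_right₀ hB hr))
    have htop := ih (q := q + 1) hq
    have h4 : 4 ^ (q + 1) * (2 * M) ≤ K := by
      have : (4 : ℝ) ^ (q + 1) ≤ 4 ^ p := pow_le_pow_right₀ (by norm_num) hq
      simp only [K]; nlinarith
    rw [show 2 * (q + 1) = 2 * q + 2 by ring] at htop ⊢
    rw [show K * (1 + ∑ j ∈ insert i F, a j ^ 2) = B + a i ^ 2 * K by
      simp only [B, sum_insert hi]; ring]
    simp only [sum_insert hi]
    calc ∫ ω, (a i * Z i ω + ∑ j ∈ F, a j * Z j ω) ^ (2 * q + 2) ∂P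
        ≤ B ^ (q + 1) + a i ^ 2 * (4 ^ (q + 1) * (2 * M)) * B ^ q := by linarith
      _ ≤ B ^ (q + 1) + a i ^ 2 * K * B ^ q := by gcongr
      _ ≤ (B + a i ^ 2 * K) ^ (q + 1) :=
        pow_succ_add_mul_pow_le (by linarith) (by positivity) q

theorem integral_sum_mul_pow_le_of_abs_le (hmeas : ∀ j, Measurable (Z j))
    (hindep : iIndepFun Z P) (hLp : ∀ j (m : ℕ), MemLp (Z j) m P)
    (hmean : ∀ j, ∫ ω, Z j ω ∂P = 0) {p : ℕ} {M : ℝ}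
    (hM : ∀ j r, r ≤ 2 * p → |∫ ω, Z j ω ^ r ∂P| ≤ M) {a : ℕ → ℝ} {c : ℝ} (hc : 0 < c)
    (ha : ∀ j, |a j| ≤ c) (F : Finset ℕ) :
    ∫ ω, (∑ j ∈ F, a j * Z j ω) ^ (2 * p) ∂P ≤
      (2 * 4 ^ p * M * (c ^ 2 + ∑ j ∈ F, a j ^ 2)) ^ p := by
  have hb : ∀ j, |a j / c| ≤ 1 := fun j => by
    rw [abs_div, abs_of_pos hc, div_le_one hc]; exact ha j
  have hsum : ∀ ω, ∑ j ∈ F, a j * Z j ω = c * ∑ j ∈ F, a j / c * Z j ω := fun ω => by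
    rw [mul_sum]; exact sum_congr rfl fun j _ => by field_simp
  have hsq : c ^ 2 + ∑ j ∈ F, a j ^ 2 = c ^ 2 * (1 + ∑ j ∈ F, (a j / c) ^ 2) := by
    rw [mul_add, mul_sum]; congr 1 <;> [ring; exact sum_congr rfl fun j _ => by field_simp]
  have hpt : ∀ ω, (∑ j ∈ F, a j * Z j ω) ^ (2 * p) =
      (c ^ 2) ^ p * (∑ j ∈ F, a j / c * Z j ω) ^ (2 * p) := fun ω => by
    rw [hsum, mul_pow, pow_mul]
  rw [integral_congr_ae (ae_of_all _ hpt), integral_const_mul, hsq]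
  calc (c ^ 2) ^ p * ∫ ω, (∑ j ∈ F, a j / c * Z j ω) ^ (2 * p) ∂P
      ≤ (c ^ 2) ^ p * (2 * 4 ^ p * M * (1 + ∑ j ∈ F, (a j / c) ^ 2)) ^ p := by
        gcongr; exact integral_sum_mul_pow_le hmeas hindep hLp hmean hM hb F le_rfl
    _ = _ := by rw [← mul_pow]; congr 1; ring

theorem integral_abs_donskerApprox_sub_pow_le (hmeas : ∀ j, Measurable (Z j))
    (hindep : iIndepFun Z P) (hLp : ∀ j (m : ℕ), MemLp (Z j) m P)
    (hmean : ∀ j, ∫ ω, Z j ω ∂P = 0) {p : ℕ} {M : ℝ}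
    (hM : ∀ j r, r ≤ 2 * p → |∫ ω, Z j ω ^ r ∂P| ≤ M) {n : ℕ} (hn : 1 ≤ n) {s t : ℝ}
    (hs : 0 ≤ s) (hst : s < t) (ht : t ≤ 1) :
    ∫ ω, |donskerApprox Z n t ω - donskerApprox Z n s ω| ^ (2 * p) ∂P ≤
      (2 * (2 * 4 ^ p * M)) ^ p * (t - s) ^ p := by
  have hn0 : (0 : ℝ) < n := by exact_mod_cast hn
  have hnst : (n : ℝ) * s < n * t := by nlinarith
  set c := min 1 (n * t - n * s)
  set a : ℕ → ℝ := fun j => donskerWeight (n * t) j - donskerWeight (n * s) j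
  have ha : ∀ j, |a j| ≤ c := fun j => by
    obtain ⟨h0, h1⟩ := donskerWeight_sub_nonneg_and_le hnst.le j
    rwa [abs_of_nonneg h0]
  have hsq : c ^ 2 + ∑ j ∈ range (n + 1), a j ^ 2 ≤ 2 * (n * t - n * s) :=
    sq_add_sum_sq_donskerWeight_sub_le (by positivity) hnst (by push_cast; nlinarith)
  have hscale : |(√(n : ℝ))⁻¹| ^ (2 * p) = ((n : ℝ) ^ p)⁻¹ := by
    rw [abs_inv, abs_of_nonneg (Real.sqrt_nonneg _), inv_pow, pow_mul, Real.sq_sqrt n.cast_nonneg]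
  have hpt : ∀ ω, |donskerApprox Z n t ω - donskerApprox Z n s ω| ^ (2 * p) =
      ((n : ℝ) ^ p)⁻¹ * (∑ j ∈ range (n + 1), a j * Z j ω) ^ (2 * p) := fun ω => by
    rw [donskerApprox_sub_eq_sum Z n hs hst.le ht, abs_mul, mul_pow, hscale,
      (even_two_mul p).pow_abs]
  set K := 2 * 4 ^ p * M
  have hK : 0 ≤ K := by
    have := (abs_nonneg _).trans (hM 0 0 (Nat.zero_le _)); positivity
  rw [integral_congr_ae (ae_of_all _ hpt), integral_const_mul]
  calc ((n : ℝ) ^ p)⁻¹ * ∫ ω, (∑ j ∈ range (n + 1), a j * Z j ω) ^ (2 * p) ∂P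
      ≤ ((n : ℝ) ^ p)⁻¹ * (K * (c ^ 2 + ∑ j ∈ range (n + 1), a j ^ 2)) ^ p := by
        gcongr
        exact integral_sum_mul_pow_le_of_abs_le hmeas hindep hLp hmean hM
          (lt_min one_pos (sub_pos.2 hnst)) ha _
    _ ≤ ((n : ℝ) ^ p)⁻¹ * (K * (2 * (n * t - n * s))) ^ p := by gcongr
    _ = (2 * K) ^ p * (t - s) ^ p := by
        rw [← mul_sub, show K * (2 * (n * (t - s))) = n * (2 * K * (t - s)) by ring, mul_pow,
          inv_mul_cancel_left₀ (pow_ne_zero _ hn0.ne'), mul_pow]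

end WeightedSums

theorem donsker_moment_bound_general
    (Ω : Type*) (mΩ : MeasurableSpace Ω) (P : Measure Ω) [IsProbabilityMeasure P]
    (Z : ℕ → Ω → ℝ)
    (hmeas : ∀ j, Measurable (Z j))
    (hindep : iIndepFun Z P)
    (hident : ∀ j, P.map (Z j) = P.map (Z 0))
    (hmean : ∫ ω, Z 0 ω ∂P = 0)
    (hmom : ∀ m : ℕ, Integrable (fun ω => |Z 0 ω| ^ m) P)
    (p : ℕ) :
    ∃ C : ℝ, ∀ n : ℕ, 1 ≤ n → ∀ s t : ℝ, 0 ≤ s → s < t → t ≤ 1 →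
      ∫ ω, |donskerApprox Z n t ω - donskerApprox Z n s ω| ^ (2 * p) ∂P ≤
        C * |t - s| ^ p := by
  have hid : ∀ j, IdentDistrib (Z j) (Z 0) P P := fun j =>
    ⟨(hmeas j).aemeasurable, (hmeas 0).aemeasurable, hident j⟩
  have hLp : ∀ j (m : ℕ), MemLp (Z j) m P := fun j m =>
    (hid j).memLp_iff.2 (memLp_of_integrable_abs_pow (hmeas 0).aestronglyMeasurable (hmom m))
  set M := ∑ r ∈ range (2 * p + 1), ∫ ω, |Z 0 ω| ^ r ∂P
  have hM : ∀ j r, r ≤ 2 * p → |∫ ω, Z j ω ^ r ∂P| ≤ M := fun j r hr => by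
    rw [show ∫ ω, Z j ω ^ r ∂P = ∫ ω, Z 0 ω ^ r ∂P from
      ((hid j).comp (continuous_pow r).measurable).integral_eq]
    calc |∫ ω, Z 0 ω ^ r ∂P| ≤ ∫ ω, |Z 0 ω| ^ r ∂P := by
          simpa only [Real.norm_eq_abs, abs_pow] using
            norm_integral_le_integral_norm (fun ω => Z 0 ω ^ r)
      _ ≤ M := single_le_sum (f := fun r => ∫ ω, |Z 0 ω| ^ r ∂P)
          (fun k _ => integral_nonneg fun ω => by positivity) (mem_range.2 (by omega))
  refine ⟨(2 * (2 * 4 ^ p * M)) ^ p, fun n hn s t hs hst ht => ?_⟩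
  rw [abs_of_pos (sub_pos.2 hst)]
  exact integral_abs_donskerApprox_sub_pow_le hmeas hindep hLp
    (fun j => (hid j).integral_eq.trans hmean) hM hn hs hst ht

/-- Uniform-in-`n` moment bound for the Donsker approximation: if `(Z_j)` are i.i.d.
centered with unit variance and finite moments of every order, then for every `p ≥ 1`
there is a constant `C_p` (depending only on `p` and the law of `Z_1`) with
`sup_n E[|S^n_t - S^n_s|^{2p}] ≤ C_p |t-s|^p` for all `0 ≤ s < t ≤ 1`. -/
theorem donsker_moment_bound
    (Ω : Type*) (mΩ : MeasurableSpace Ω) (P : Measure Ω) [IsProbabilityMeasure P]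
    (Z : ℕ → Ω → ℝ)
    (hmeas : ∀ j, Measurable (Z j))
    (hindep : iIndepFun Z P)
    (hident : ∀ j, P.map (Z j) = P.map (Z 0))
    (hmean : ∫ ω, Z 0 ω ∂P = 0)
    (hvar : ∫ ω, (Z 0 ω) ^ 2 ∂P = 1)
    (hmom : ∀ m : ℕ, Integrable (fun ω => |Z 0 ω| ^ m) P)
    (p : ℕ) (hp : 1 ≤ p) :
    ∃ C : ℝ, ∀ n : ℕ, 1 ≤ n → ∀ s t : ℝ, 0 ≤ s → s < t → t ≤ 1 →
      ∫ ω, |donskerApprox Z n t ω - donskerApprox Z n s ω| ^ (2 * p) ∂P ≤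
        C * |t - s| ^ p :=
  donsker_moment_bound_general Ω mΩ P Z hmeas hindep hident hmean hmom p
end

section
/- Let β be a standard Brownian motion on [0,1] and, for n ≥ 1, let β^n be its piecewise linear interpolation with mesh 1/n, i.e. β^n_t = β_{i/n} + n·(t − i/n)·(β_{(i+1)/n} − β_{i/n}) for t ∈ [i/n, (i+1)/n], 0 ≤ i ≤ n−1. Then for every integer p ≥ 1 there exists a constant C_p, depending only on p, such that: (i) E[|β^n_t − β^n_s|^{2p}] ≤ C_p |t−s|^p for all n ≥ 1 and all s, t ∈ [0,1]; and (ii) sup_{t∈[0,1]} E[|β^n_t − β_t|^{2p}] ≤ C_p n^{−p} for all n ≥ 1. -/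
open MeasureTheory ProbabilityTheory

/-- A standard Brownian motion on `[0,1]`: a real-valued process with measurable
marginals, continuous paths on `[0,1]`, starting at `0`, with centered Gaussian
increments of variance `t - s` and independent increments. -/
def IsStdBrownianMotion {Ω : Type*} [MeasurableSpace Ω] (P : Measure Ω)
    (β : ℝ → Ω → ℝ) : Prop :=
  (∀ t, Measurable (β t)) ∧
  (∀ ω, ContinuousOn (fun t => β t ω) (Set.Icc 0 1)) ∧
  (∀ ω, β 0 ω = 0) ∧
  (∀ s t : ℝ, 0 ≤ s → s ≤ t → t ≤ 1 →
    P.map (fun ω => β t ω - β s ω) = gaussianReal 0 (Real.toNNReal (t - s))) ∧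
  (∀ (n : ℕ) (u : Fin (n + 1) → ℝ), (∀ i, u i ∈ Set.Icc (0 : ℝ) 1) → Monotone u →
    iIndepFun
      (fun i : Fin n => fun ω => β (u i.succ) ω - β (u i.castSucc) ω) P)

/-- The piecewise linear interpolation of a process `β` with mesh `1/n`: for
`t ∈ [i/n, (i+1)/n]` one has `⌊nt⌋ = i` (or `i+1` with a vanishing extra term), so this
closed formula gives `β^n_t = β_{i/n} + n (t - i/n) (β_{(i+1)/n} - β_{i/n})`. -/
noncomputable def linearInterp {Ω : Type*} (β : ℝ → Ω → ℝ) (n : ℕ) (t : ℝ) (ω : Ω) : ℝ :=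
  β ((⌊(n : ℝ) * t⌋₊ : ℝ) / n) ω +
    ((n : ℝ) * t - (⌊(n : ℝ) * t⌋₊ : ℝ)) *
      (β (((⌊(n : ℝ) * t⌋₊ : ℝ) + 1) / n) ω - β ((⌊(n : ℝ) * t⌋₊ : ℝ) / n) ω)

/-!
On a grid cell `[k/n, (k+1)/n]` the interpolation is affine, so there
`β^n_t - β^n_s = n (t - s) (β_{(k+1)/n} - β_{k/n})`, a centred Gaussian of variance
`n (t - s)² ≤ t - s`. For `s`, `t` in different cells, `β^n_t - β^n_s` splits at the grid points
into two such in-cell pieces and one Brownian increment, each of variance at most `t - s`;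
likewise `β^n_t - β_t` is an in-cell piece plus a Brownian increment, both of variance at most
`1/n`. A centred Gaussian of variance `v` has `2p`-th absolute moment `v^p E|Z|^{2p}`, and
`|x₁ + ⋯ + x_N|^{2p} ≤ N^{2p-1} ∑ |xᵢ|^{2p}`, which gives both bounds with `C_p = 9^p E|Z|^{2p}`.
-/

open Finset
open scoped NNReal

noncomputable def gaussianEvenMoment (p : ℕ) : ℝ := ∫ x, |x| ^ (2 * p) ∂gaussianReal 0 1

lemma gaussianEvenMoment_nonneg (p : ℕ) : 0 ≤ gaussianEvenMoment p :=
  integral_nonneg fun _ => by positivity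

section GaussianLaw

variable {Ω : Type*} [MeasurableSpace Ω] {P : Measure Ω} {X : Ω → ℝ} {v : ℝ≥0}

lemma aemeasurable_of_map_eq_gaussianReal (h : P.map X = gaussianReal 0 v) : AEMeasurable X P :=
  .of_map_ne_zero (h ▸ IsProbabilityMeasure.ne_zero _)

lemma integrable_abs_pow_of_map_eq_gaussianReal (h : P.map X = gaussianReal 0 v) (m : ℕ) :
    Integrable (fun ω => |X ω| ^ m) P := by
  have hg : Integrable (fun x : ℝ => |x| ^ m) (P.map X) := by
    simpa [h] using (memLp_id_gaussianReal (μ := 0) (v := v) m).integrable_norm_pow'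
  exact (integrable_map_measure (by fun_prop) (aemeasurable_of_map_eq_gaussianReal h)).1 hg

lemma integral_abs_pow_of_map_eq_gaussianReal (h : P.map X = gaussianReal 0 v) (p : ℕ) :
    ∫ ω, |X ω| ^ (2 * p) ∂P = (v : ℝ) ^ p * gaussianEvenMoment p := by
  have hscale : gaussianReal 0 v = (gaussianReal 0 1).map (Real.sqrt v * ·) := by
    rw [gaussianReal_map_const_mul, mul_zero, mul_one]
    congr
    ext
    simp
  rw [← integral_map (f := fun x => |x| ^ (2 * p)) (aemeasurable_of_map_eq_gaussianReal h)
    (by fun_prop), h, hscale, integral_map (by fun_prop) (by fun_prop), gaussianEvenMoment,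
    ← integral_const_mul]
  congr with x
  rw [abs_mul, mul_pow, pow_mul, pow_mul, sq_abs, Real.sq_sqrt v.coe_nonneg]

end GaussianLaw

lemma integral_abs_sum_pow_le {Ω ι : Type*} [MeasurableSpace Ω] {P : Measure Ω} (s : Finset ι)
    {X : ι → Ω → ℝ} {m : ℕ} {B : ℝ} (hint : ∀ i ∈ s, Integrable (fun ω => |X i ω| ^ (m + 1)) P)
    (hB : ∀ i ∈ s, ∫ ω, |X i ω| ^ (m + 1) ∂P ≤ B) :
    ∫ ω, |∑ i ∈ s, X i ω| ^ (m + 1) ∂P ≤ (#s : ℝ) ^ (m + 1) * B := by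
  have hjensen : ∀ ω, |∑ i ∈ s, X i ω| ^ (m + 1) ≤ (#s : ℝ) ^ m * ∑ i ∈ s, |X i ω| ^ (m + 1) :=
    fun ω => (pow_le_pow_left₀ (abs_nonneg _) (abs_sum_le_sum_abs _ _) _).trans
      (pow_sum_le_card_mul_sum_pow (fun i _ => abs_nonneg (X i ω)) m)
  calc ∫ ω, |∑ i ∈ s, X i ω| ^ (m + 1) ∂P
      ≤ ∫ ω, (#s : ℝ) ^ m * ∑ i ∈ s, |X i ω| ^ (m + 1) ∂P :=
        integral_mono_of_nonneg (.of_forall fun _ => by positivity)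
          ((integrable_finsetSum s hint).const_mul _) (.of_forall hjensen)
    _ = (#s : ℝ) ^ m * ∑ i ∈ s, ∫ ω, |X i ω| ^ (m + 1) ∂P := by
        rw [integral_const_mul, integral_finsetSum s hint]
    _ ≤ (#s : ℝ) ^ m * (#s * B) := by
        gcongr
        simpa using sum_le_sum hB
    _ = (#s : ℝ) ^ (m + 1) * B := by ring

def HasGaussianIncrements {Ω : Type*} [MeasurableSpace Ω] (P : Measure Ω) (β : ℝ → Ω → ℝ) :
    Prop :=
  ∀ s t : ℝ, 0 ≤ s → s ≤ t → t ≤ 1 →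
    P.map (fun ω => β t ω - β s ω) = gaussianReal 0 (Real.toNNReal (t - s))

lemma IsStdBrownianMotion.hasGaussianIncrements {Ω : Type*} [MeasurableSpace Ω] {P : Measure Ω}
    {β : ℝ → Ω → ℝ} (hβ : IsStdBrownianMotion P β) : HasGaussianIncrements P β :=
  hβ.2.2.2.1

namespace HasGaussianIncrements

variable {Ω : Type*} [MeasurableSpace Ω] {P : Measure Ω} {β : ℝ → Ω → ℝ}

lemma integrable_abs_const_mul_sub_pow (hβ : HasGaussianIncrements P β) {a b : ℝ} (c : ℝ)
    (ha : 0 ≤ a) (hab : a ≤ b) (hb : b ≤ 1) (m : ℕ) :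
    Integrable (fun ω => |c * (β b ω - β a ω)| ^ m) P := by
  simp only [abs_mul, mul_pow]
  exact (integrable_abs_pow_of_map_eq_gaussianReal (hβ a b ha hab hb) m).const_mul _

lemma integral_abs_const_mul_sub_pow_le (hβ : HasGaussianIncrements P β) {a b c r : ℝ}
    (ha : 0 ≤ a) (hab : a ≤ b) (hb : b ≤ 1) (hr : c ^ 2 * (b - a) ≤ r) (p : ℕ) :
    ∫ ω, |c * (β b ω - β a ω)| ^ (2 * p) ∂P ≤ r ^ p * gaussianEvenMoment p := by
  have hvar : ((b - a).toNNReal : ℝ) = b - a := Real.coe_toNNReal _ (sub_nonneg.2 hab)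
  simp only [abs_mul, mul_pow]
  rw [integral_const_mul, integral_abs_pow_of_map_eq_gaussianReal (hβ a b ha hab hb), hvar,
    pow_mul, sq_abs, ← mul_assoc, ← mul_pow]
  gcongr
  exact gaussianEvenMoment_nonneg p

lemma integral_abs_sum_const_mul_sub_pow_le (hβ : HasGaussianIncrements P β) {ι : Type*}
    (s : Finset ι) {a b c : ι → ℝ} {r : ℝ}
    (hterm : ∀ i ∈ s, (0 ≤ a i ∧ a i ≤ b i ∧ b i ≤ 1) ∧ c i ^ 2 * (b i - a i) ≤ r)
    {p : ℕ} (hp : 1 ≤ p) :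
    ∫ ω, |∑ i ∈ s, c i * (β (b i) ω - β (a i) ω)| ^ (2 * p) ∂P ≤
      (#s : ℝ) ^ (2 * p) * (r ^ p * gaussianEvenMoment p) := by
  obtain ⟨m, hm⟩ : ∃ m, 2 * p = m + 1 := ⟨2 * p - 1, by omega⟩
  rw [hm]
  refine integral_abs_sum_pow_le s (fun i hi => ?_) (fun i hi => ?_)
  · obtain ⟨⟨ha, hab, hb⟩, -⟩ := hterm i hi
    exact hβ.integrable_abs_const_mul_sub_pow _ ha hab hb _
  · obtain ⟨⟨ha, hab, hb⟩, hr⟩ := hterm i hi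
    rw [← hm]
    exact hβ.integral_abs_const_mul_sub_pow_le ha hab hb hr p

end HasGaussianIncrements

section Grid

variable {n : ℕ}

lemma add_one_div_sub_div {K : Type*} [DivisionRing K] (a b : K) : (a + 1) / b - a / b = 1 / b := by
  rw [← sub_div, add_sub_cancel_left]

lemma natCast_div_cell_bounds {k : ℕ} (hk : k < n) :
    0 ≤ (k : ℝ) / n ∧ (k : ℝ) / n ≤ ((k : ℝ) + 1) / n ∧ ((k : ℝ) + 1) / n ≤ 1 := by
  have hn' : (0 : ℝ) < n := Nat.cast_pos.2 (Nat.zero_lt_of_lt hk)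
  refine ⟨by positivity, by gcongr; linarith, ?_⟩
  rw [div_le_one hn']
  exact_mod_cast hk

lemma exists_mem_Icc_natCast_div (hn : n ≠ 0) {t : ℝ} (ht : t ∈ Set.Icc (0 : ℝ) 1) :
    ∃ k < n, t ∈ Set.Icc ((k : ℝ) / n) ((k + 1) / n) := by
  have hn' : (0 : ℝ) < n := Nat.cast_pos.2 (Nat.pos_of_ne_zero hn)
  rcases ht.2.lt_or_eq with hlt | rfl
  · refine ⟨⌊(n : ℝ) * t⌋₊, ?_, ?_, ?_⟩
    · exact (Nat.floor_lt (by nlinarith [ht.1])).2 (by nlinarith)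
    · rw [div_le_iff₀' hn']; exact Nat.floor_le (by nlinarith [ht.1])
    · rw [le_div_iff₀' hn']; exact (Nat.lt_floor_add_one _).le
  · refine ⟨n - 1, by omega, ?_, ?_⟩
    · rw [div_le_one hn']; norm_num
    · rw [Nat.cast_sub (by omega), le_div_iff₀ hn']; norm_num

lemma sq_natCast_mul_sub_mul_cell_width_le (hn : n ≠ 0) {k : ℕ} {s t : ℝ}
    (hs : s ∈ Set.Icc ((k : ℝ) / n) ((k + 1) / n)) (ht : t ∈ Set.Icc ((k : ℝ) / n) ((k + 1) / n))
    (hst : s ≤ t) : (n * (t - s)) ^ 2 * (((k : ℝ) + 1) / n - k / n) ≤ t - s := by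
  have hn' : (0 : ℝ) < n := Nat.cast_pos.2 (Nat.pos_of_ne_zero hn)
  have hshort : n * (t - s) ≤ 1 := by
    have := sub_le_sub ht.2 hs.1
    rwa [add_one_div_sub_div, le_div_iff₀' hn'] at this
  calc (n * (t - s)) ^ 2 * (((k : ℝ) + 1) / n - k / n) = (t - s) * (n * (t - s)) := by
        rw [add_one_div_sub_div]; field_simp
    _ ≤ (t - s) * 1 := by gcongr
    _ = t - s := mul_one _

end Grid

section Interpolation

variable {Ω : Type*} {n : ℕ}

lemma linearInterp_natCast_div (β : ℝ → Ω → ℝ) (hn : n ≠ 0) (k : ℕ) (ω : Ω) :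
    linearInterp β n (k / n) ω = β (k / n) ω := by
  have hnk : (n : ℝ) * (k / n) = k := mul_div_cancel₀ _ (Nat.cast_ne_zero.2 hn)
  simp [linearInterp, hnk]

lemma linearInterp_eq_of_mem_Icc (β : ℝ → Ω → ℝ) (hn : n ≠ 0) {k : ℕ} {t : ℝ}
    (ht : t ∈ Set.Icc ((k : ℝ) / n) ((k + 1) / n)) (ω : Ω) :
    linearInterp β n t ω = β (k / n) ω + (n * t - k) * (β ((k + 1) / n) ω - β (k / n) ω) := by
  have hn' : (0 : ℝ) < n := Nat.cast_pos.2 (Nat.pos_of_ne_zero hn)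
  have hlo : (k : ℝ) ≤ n * t := by rw [← div_le_iff₀' hn']; exact ht.1
  have hhi : n * t ≤ (k : ℝ) + 1 := by rw [← le_div_iff₀' hn']; exact ht.2
  rcases hhi.lt_or_eq with hlt | heq
  · have hfloor : ⌊(n : ℝ) * t⌋₊ = k :=
      (Nat.floor_eq_iff ((Nat.cast_nonneg k).trans hlo)).2 ⟨hlo, hlt⟩
    rw [linearInterp, hfloor]
  · have ht' : t = ((k + 1 : ℕ) : ℝ) / n := by
      rw [eq_div_iff hn'.ne']; push_cast; linarith
    rw [heq, ht', linearInterp_natCast_div β hn]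
    push_cast
    ring

lemma linearInterp_sub_of_mem_Icc (β : ℝ → Ω → ℝ) (hn : n ≠ 0) {k : ℕ} {s t : ℝ}
    (hs : s ∈ Set.Icc ((k : ℝ) / n) ((k + 1) / n)) (ht : t ∈ Set.Icc ((k : ℝ) / n) ((k + 1) / n))
    (ω : Ω) :
    linearInterp β n t ω - linearInterp β n s ω =
      (n * (t - s)) * (β ((k + 1) / n) ω - β (k / n) ω) := by
  rw [linearInterp_eq_of_mem_Icc β hn ht, linearInterp_eq_of_mem_Icc β hn hs]
  ring

end Interpolation

namespace HasGaussianIncrements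

variable {Ω : Type*} [MeasurableSpace Ω] {P : Measure Ω} {β : ℝ → Ω → ℝ} {n : ℕ} {s t : ℝ}
  {p : ℕ}

lemma integral_abs_linearInterp_sub_pow_le_of_mem_Icc (hβ : HasGaussianIncrements P β)
    (hn : n ≠ 0) {k : ℕ} (hk : k < n) (hs : s ∈ Set.Icc ((k : ℝ) / n) ((k + 1) / n))
    (ht : t ∈ Set.Icc ((k : ℝ) / n) ((k + 1) / n)) (hst : s ≤ t) :
    ∫ ω, |linearInterp β n t ω - linearInterp β n s ω| ^ (2 * p) ∂P ≤
      (t - s) ^ p * gaussianEvenMoment p := by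
  obtain ⟨h0, hmono, h1⟩ := natCast_div_cell_bounds hk
  simp only [linearInterp_sub_of_mem_Icc β hn hs ht]
  exact hβ.integral_abs_const_mul_sub_pow_le h0 hmono h1
    (sq_natCast_mul_sub_mul_cell_width_le hn hs ht hst) p

lemma integral_abs_linearInterp_sub_pow_le_of_lt (hβ : HasGaussianIncrements P β) (hn : n ≠ 0)
    (hp : 1 ≤ p) {i j : ℕ} (hij : i < j) (hj : j < n)
    (hs : s ∈ Set.Icc ((i : ℝ) / n) ((i + 1) / n)) (ht : t ∈ Set.Icc ((j : ℝ) / n) ((j + 1) / n)) :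
    ∫ ω, |linearInterp β n t ω - linearInterp β n s ω| ^ (2 * p) ∂P ≤
      9 ^ p * gaussianEvenMoment p * (t - s) ^ p := by
  have hi := natCast_div_cell_bounds (hij.trans hj)
  have hj := natCast_div_cell_bounds hj
  have hgrid : ((i : ℝ) + 1) / n ≤ j / n := by gcongr; exact_mod_cast hij
  have hjt : (j : ℝ) / n ∈ Set.Icc ((j : ℝ) / n) ((j + 1) / n) := Set.left_mem_Icc.2 hj.2.1
  have his : ((i : ℝ) + 1) / n ∈ Set.Icc ((i : ℝ) / n) ((i + 1) / n) :=
    Set.right_mem_Icc.2 hi.2.1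
  have hsplit : ∀ ω, linearInterp β n t ω - linearInterp β n s ω =
      ∑ l : Fin 3, ![n * (t - j / n), 1, n * ((i + 1) / n - s)] l *
        (β (![((j : ℝ) + 1) / n, j / n, (i + 1) / n] l) ω -
          β (![(j : ℝ) / n, (i + 1) / n, i / n] l) ω) := by
    intro ω
    have hgrid_i := linearInterp_natCast_div β hn (i + 1) ω
    push_cast at hgrid_i
    simp only [Fin.sum_univ_three, Matrix.cons_val_zero, Matrix.cons_val_one, Matrix.cons_val_two,
      Matrix.head_cons, Matrix.tail_cons]
    linear_combination linearInterp_sub_of_mem_Icc β hn hjt ht ω +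
      linearInterp_sub_of_mem_Icc β hn hs his ω + linearInterp_natCast_div β hn j ω - hgrid_i
  simp only [hsplit]
  refine (hβ.integral_abs_sum_const_mul_sub_pow_le (r := t - s) univ (fun l _ => ?_) hp).trans_eq
    ?_
  · fin_cases l <;> simp only [Fin.zero_eta, Fin.mk_one, Fin.reduceFinMk, Matrix.cons_val_zero,
      Matrix.cons_val_one, Matrix.cons_val_two, Matrix.head_cons, Matrix.tail_cons]
    · exact ⟨hj, (sq_natCast_mul_sub_mul_cell_width_le hn hjt ht ht.1).trans
        (sub_le_sub_left (hs.2.trans hgrid) t)⟩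
    · exact ⟨⟨hi.1.trans hi.2.1, hgrid, hj.2.1.trans hj.2.2⟩,
        by rw [one_pow, one_mul]; exact sub_le_sub ht.1 hs.2⟩
    · exact ⟨hi, (sq_natCast_mul_sub_mul_cell_width_le hn hs his hs.2).trans
        (sub_le_sub_right (hgrid.trans ht.1) s)⟩
  · simp only [card_univ, Fintype.card_fin, pow_mul]
    ring

lemma integral_abs_linearInterp_sub_pow_le (hβ : HasGaussianIncrements P β) (hn : n ≠ 0)
    (hp : 1 ≤ p) (hs : s ∈ Set.Icc (0 : ℝ) 1) (ht : t ∈ Set.Icc (0 : ℝ) 1) :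
    ∫ ω, |linearInterp β n t ω - linearInterp β n s ω| ^ (2 * p) ∂P ≤
      9 ^ p * gaussianEvenMoment p * |t - s| ^ p := by
  wlog hst : s ≤ t generalizing s t
  · simpa only [abs_sub_comm] using this ht hs (le_of_not_ge hst)
  rw [abs_of_nonneg (sub_nonneg.2 hst)]
  obtain ⟨i, hi, hsi⟩ := exists_mem_Icc_natCast_div hn hs
  obtain ⟨j, hj, htj⟩ := exists_mem_Icc_natCast_div hn ht
  rcases lt_or_ge i j with hij | hji
  · exact hβ.integral_abs_linearInterp_sub_pow_le_of_lt hn hp hij hj hsi htj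
  have hti : t ∈ Set.Icc ((i : ℝ) / n) ((i + 1) / n) :=
    ⟨hsi.1.trans hst, htj.2.trans (by gcongr)⟩
  calc _ ≤ (t - s) ^ p * gaussianEvenMoment p :=
        hβ.integral_abs_linearInterp_sub_pow_le_of_mem_Icc hn hi hsi hti hst
    _ ≤ 9 ^ p * gaussianEvenMoment p * (t - s) ^ p := by
        rw [mul_comm, mul_assoc]
        exact le_mul_of_one_le_left (by have := gaussianEvenMoment_nonneg p; positivity)
          (one_le_pow₀ (by norm_num))

lemma integral_abs_linearInterp_sub_self_pow_le (hβ : HasGaussianIncrements P β) (hn : n ≠ 0)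
    (hp : 1 ≤ p) (ht : t ∈ Set.Icc (0 : ℝ) 1) :
    ∫ ω, |linearInterp β n t ω - β t ω| ^ (2 * p) ∂P ≤
      4 ^ p * gaussianEvenMoment p * ((n : ℝ) ^ p)⁻¹ := by
  obtain ⟨k, hk, htk⟩ := exists_mem_Icc_natCast_div hn ht
  have hcell := natCast_div_cell_bounds hk
  have hkk : (k : ℝ) / n ∈ Set.Icc ((k : ℝ) / n) ((k + 1) / n) := Set.left_mem_Icc.2 hcell.2.1
  have hclose : t - k / n ≤ 1 / n := by
    rw [← add_one_div_sub_div]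
    exact sub_le_sub_right htk.2 _
  have hsplit : ∀ ω, linearInterp β n t ω - β t ω =
      ∑ l : Fin 2, ![n * (t - k / n), -1] l *
        (β (![((k : ℝ) + 1) / n, t] l) ω - β (![(k : ℝ) / n, k / n] l) ω) := by
    intro ω
    simp only [Fin.sum_univ_two, Matrix.cons_val_zero, Matrix.cons_val_one]
    linear_combination linearInterp_sub_of_mem_Icc β hn hkk htk ω +
      linearInterp_natCast_div β hn k ω
  simp only [hsplit]
  refine (hβ.integral_abs_sum_const_mul_sub_pow_le (r := 1 / n) univ (fun l _ => ?_) hp).trans_eq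
    ?_
  · fin_cases l <;> simp only [Fin.zero_eta, Fin.mk_one, Matrix.cons_val_zero,
      Matrix.cons_val_one]
    · exact ⟨hcell, (sq_natCast_mul_sub_mul_cell_width_le hn hkk htk htk.1).trans hclose⟩
    · exact ⟨⟨hcell.1, htk.1, ht.2⟩, by rwa [neg_one_sq, one_mul]⟩
  · simp only [card_univ, Fintype.card_fin, pow_mul, one_div, inv_pow]
    ring

end HasGaussianIncrements

/-- The Wong–Zakai linear interpolation `β^n` of a Brownian motion `β` with mesh `1/n`
satisfies the two conditions of the general convergence criterion (with `ν = 1`):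
(i) `E[|β^n_t - β^n_s|^{2p}] ≤ C_p |t-s|^p` and
(ii) `sup_{t∈[0,1]} E[|β^n_t - β_t|^{2p}] ≤ C_p n^{-p}`,
for a constant `C_p` depending only on `p`. -/
theorem wong_zakai_interpolation_bounds (p : ℕ) (hp : 1 ≤ p) :
    ∃ C : ℝ, ∀ (Ω : Type) (mΩ : MeasurableSpace Ω) (P : Measure Ω),
      IsProbabilityMeasure P →
      ∀ β : ℝ → Ω → ℝ, IsStdBrownianMotion P β →
        ∀ n : ℕ, 1 ≤ n →
          (∀ s t : ℝ, s ∈ Set.Icc (0 : ℝ) 1 → t ∈ Set.Icc (0 : ℝ) 1 →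
            ∫ ω, |linearInterp β n t ω - linearInterp β n s ω| ^ (2 * p) ∂P ≤
              C * |t - s| ^ p) ∧
          (∀ t : ℝ, t ∈ Set.Icc (0 : ℝ) 1 →
            ∫ ω, |linearInterp β n t ω - β t ω| ^ (2 * p) ∂P ≤
              C * ((n : ℝ) ^ p)⁻¹) := by
  refine ⟨9 ^ p * gaussianEvenMoment p, fun Ω _ P _ β hβ n hn => ⟨?_, fun t ht => ?_⟩⟩
  · exact fun s t hs ht =>
      hβ.hasGaussianIncrements.integral_abs_linearInterp_sub_pow_le (by omega) hp hs ht
  · refine (hβ.hasGaussianIncrements.integral_abs_linearInterp_sub_self_pow_le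
      (by omega) hp ht).trans ?_
    have := gaussianEvenMoment_nonneg p
    gcongr
    norm_num
end

section
/- Let B be a Banach space and (S_t)_{t≥0} a semigroup of bounded linear operators on B (S_0 = Id, S_{t+t'} = S_t ∘ S_{t'}) satisfying the contraction bound ‖S_t x‖ ≤ ‖x‖ for all t ≥ 0 and x ∈ B. Let z be a B-valued function on the simplex {(s,t) : 0 ≤ s ≤ t ≤ T} such that z_{ts} = z_{tu} + S_{t−u} z_{us} for all 0 ≤ s ≤ u ≤ t ≤ T, and suppose there exist c ≥ 0 and μ > 1 with ‖z_{ts}‖ ≤ c |t−s|^μ for all s ≤ t. Then z_{ts} = 0 for all 0 ≤ s ≤ t ≤ T. -/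
/-!
Twisted additivity and contractivity of `S` make `(s, t) ↦ ‖z t s‖` subadditive along
subdivisions of `[s, t]`. Cutting `[s, t]` into `n` equal pieces therefore bounds `‖z t s‖` by
`n · c ((t - s) / n)^μ = c (t - s)^μ n^(1 - μ)`, which tends to `0` because `μ > 1`.
-/

open Filter Topology

section Subdivision

variable {f : ℝ → ℝ → ℝ} {ω : ℝ → ℝ} {T : ℝ}
  (hsub : ∀ s u t : ℝ, 0 ≤ s → s ≤ u → u ≤ t → t ≤ T → f t s ≤ f t u + f u s)
  (hω : ∀ s t : ℝ, 0 ≤ s → s ≤ t → t ≤ T → f t s ≤ ω (t - s))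
include hsub hω

theorem apply_add_succ_mul_le_of_subadditive (n : ℕ) {s h : ℝ} (hs : 0 ≤ s) (hh : 0 ≤ h)
    (hT : s + (n + 1) * h ≤ T) : f (s + (n + 1) * h) s ≤ (n + 1) * ω h := by
  induction n with
  | zero => simpa using hω s (s + h) hs (by linarith) (by simpa using hT)
  | succ n ih =>
    push_cast at hT ⊢
    have hmid : s + (n + 1) * h ≤ s + (n + 1 + 1) * h := by nlinarith
    have hstep := hω (s + (n + 1) * h) (s + (n + 1 + 1) * h) (by positivity) hmid hT
    rw [show s + (n + 1 + 1) * h - (s + (n + 1) * h) = h by ring] at hstep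
    have hsplit := hsub s (s + (n + 1) * h) _ hs (le_add_of_nonneg_right (by positivity)) hmid hT
    calc f (s + (n + 1 + 1) * h) s
        ≤ ω h + (n + 1) * ω h := hsplit.trans (add_le_add hstep (ih (hmid.trans hT)))
      _ = (n + 1 + 1) * ω h := by ring

theorem le_succ_mul_div_of_subadditive (n : ℕ) {s t : ℝ} (hs : 0 ≤ s) (hst : s ≤ t) (ht : t ≤ T) :
    f t s ≤ (n + 1) * ω ((t - s) / (n + 1)) := by
  have hn : (0 : ℝ) < n + 1 := by positivity
  have ht_eq : s + (n + 1) * ((t - s) / (n + 1)) = t := by field_simp; ring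
  have := apply_add_succ_mul_le_of_subadditive hsub hω n hs
    (div_nonneg (sub_nonneg.2 hst) hn.le) (by rwa [ht_eq])
  rwa [ht_eq] at this

end Subdivision

theorem tendsto_mul_abs_div_rpow_atTop {μ : ℝ} (hμ : 1 < μ) (a : ℝ) :
    Tendsto (fun x : ℝ => x * |a / x| ^ μ) atTop (𝓝 0) := by
  have hpow : Tendsto (fun x : ℝ => |a| ^ μ * x ^ (1 - μ)) atTop (𝓝 0) := by
    simpa [neg_sub] using (tendsto_rpow_neg_atTop (y := μ - 1) (by linarith)).const_mul (|a| ^ μ)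
  refine hpow.congr' ?_
  filter_upwards [eventually_gt_atTop 0] with x hx
  rw [abs_div, abs_of_pos hx, Real.div_rpow (abs_nonneg a) hx.le, Real.rpow_sub hx,
    Real.rpow_one]
  field_simp

theorem twisted_additive_holder_vanishes_general
    (B : Type*) [NormedAddCommGroup B] [NormedSpace ℝ B]
    (T : ℝ)
    (S : ℝ → B →L[ℝ] B)
    (hScontr : ∀ (t : ℝ) (x : B), 0 ≤ t → ‖S t x‖ ≤ ‖x‖)
    (z : ℝ → ℝ → B)
    (hadd : ∀ s u t : ℝ, 0 ≤ s → s ≤ u → u ≤ t → t ≤ T →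
      z t s = z t u + S (t - u) (z u s))
    (c : ℝ) (μ : ℝ) (hμ : 1 < μ)
    (hbound : ∀ s t : ℝ, 0 ≤ s → s ≤ t → t ≤ T → ‖z t s‖ ≤ c * |t - s| ^ μ) :
    ∀ s t : ℝ, 0 ≤ s → s ≤ t → t ≤ T → z t s = 0 := by
  intro s t hs hst ht
  have hsub : ∀ s u t : ℝ, 0 ≤ s → s ≤ u → u ≤ t → t ≤ T → ‖z t s‖ ≤ ‖z t u‖ + ‖z u s‖ := by
    intro s u t hs hsu hut ht
    rw [hadd s u t hs hsu hut ht]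
    exact (norm_add_le _ _).trans (add_le_add_right (hScontr _ _ (sub_nonneg.2 hut)) _)
  have hsucc : Tendsto (fun n : ℕ => (n + 1 : ℝ)) atTop atTop :=
    tendsto_atTop_add_const_right _ 1 tendsto_natCast_atTop_atTop
  have hlim : Tendsto (fun n : ℕ => c * ((n + 1 : ℝ) * |(t - s) / (n + 1)| ^ μ)) atTop (𝓝 0) := by
    simpa using ((tendsto_mul_abs_div_rpow_atTop hμ (t - s)).comp hsucc).const_mul c
  refine norm_le_zero_iff.mp (ge_of_tendsto' hlim fun n => ?_)
  rw [mul_left_comm]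
  exact le_succ_mul_div_of_subadditive hsub (ω := fun h => c * |h| ^ μ) hbound n hs hst ht

/-- If `(S_t)_{t≥0}` is a contraction semigroup of bounded linear operators on a Banach
space `B` and `z` is a `B`-valued function on the simplex `{0 ≤ s ≤ t ≤ T}` satisfying the
additivity property `z_{ts} = z_{tu} + S_{t-u} z_{us}` together with a Hölder-type bound
`‖z_{ts}‖ ≤ c |t-s|^μ` of order `μ > 1`, then `z` vanishes identically. -/
theorem twisted_additive_holder_vanishes
    (B : Type*) [NormedAddCommGroup B] [NormedSpace ℝ B] [CompleteSpace B]
    (T : ℝ) (hT : 0 ≤ T)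
    (S : ℝ → B →L[ℝ] B)
    (hS0 : S 0 = ContinuousLinearMap.id ℝ B)
    (hSadd : ∀ t t' : ℝ, 0 ≤ t → 0 ≤ t' → S (t + t') = (S t).comp (S t'))
    (hScontr : ∀ (t : ℝ) (x : B), 0 ≤ t → ‖S t x‖ ≤ ‖x‖)
    (z : ℝ → ℝ → B)
    (hadd : ∀ s u t : ℝ, 0 ≤ s → s ≤ u → u ≤ t → t ≤ T →
      z t s = z t u + S (t - u) (z u s))
    (c : ℝ) (hc : 0 ≤ c) (μ : ℝ) (hμ : 1 < μ)
    (hbound : ∀ s t : ℝ, 0 ≤ s → s ≤ t → t ≤ T → ‖z t s‖ ≤ c * |t - s| ^ μ) :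
    ∀ s t : ℝ, 0 ≤ s → s ≤ t → t ≤ T → z t s = 0 :=
  twisted_additive_holder_vanishes_general B T S hScontr z hadd c μ hμ hbound
end
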